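/- arXiv:1809.03196 — 7 statements merged into one kernel-verified Lean document; each statement's English description precedes it below -/
import Mathlib

section
/- Fix constants 𝒞 > 0 and λ₀ > 0. There exist δ > 0 and C > 0 (independent of λ and τ) such that for all λ ≥ λ₀, all τ ≥ max(𝒞λ, 1), and all x, y, ξ, η, X, Ξ ∈ ℝ^d: if g_{x,ξ}(y−x, η−ξ) ≤ δ, then g_{y,η}(X, Ξ) ≤ C · g_{x,ξ}(X, Ξ). (In other words, the metric g is slowly varying, uniformly in the parameters λ, τ.) -/
/-- The metric `g_{x,ξ}(X,Ξ) = λ|X|² + (τ²+|ξ|²)⁻¹|Ξ|²` is slowly varying,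
uniformly in the parameters `λ ≥ λ₀` and `τ ≥ max(𝒞λ, 1)`. -/
theorem metric_slowly_varying (d : ℕ) (𝒞 lam₀ : ℝ) (h𝒞 : 0 < 𝒞) (hlam₀ : 0 < lam₀) :
    ∃ δ > (0:ℝ), ∃ C > (0:ℝ), ∀ lam τ : ℝ, lam₀ ≤ lam → max (𝒞 * lam) 1 ≤ τ →
      ∀ x y ξ η X Ξ : EuclideanSpace ℝ (Fin d),
        lam * ‖y - x‖ ^ 2 + (τ ^ 2 + ‖ξ‖ ^ 2)⁻¹ * ‖η - ξ‖ ^ 2 ≤ δ →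
        lam * ‖X‖ ^ 2 + (τ ^ 2 + ‖η‖ ^ 2)⁻¹ * ‖Ξ‖ ^ 2 ≤
          C * (lam * ‖X‖ ^ 2 + (τ ^ 2 + ‖ξ‖ ^ 2)⁻¹ * ‖Ξ‖ ^ 2) := by
  refine ⟨1/4, by norm_num, 4, by norm_num, ?_⟩
  intro lam τ hlam hτ x y ξ η X Ξ hδ
  have hτ1 : (1:ℝ) ≤ τ := le_trans (le_max_right _ _) hτ
  have hA : (0:ℝ) < τ ^ 2 + ‖ξ‖ ^ 2 := by positivity
  have hB : (0:ℝ) < τ ^ 2 + ‖η‖ ^ 2 := by positivity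
  have hlam0 : 0 < lam := lt_of_lt_of_le hlam₀ hlam
  -- from the hypothesis, ‖η-ξ‖² ≤ (τ²+‖ξ‖²)/4
  have h2 : (τ ^ 2 + ‖ξ‖ ^ 2)⁻¹ * ‖η - ξ‖ ^ 2 ≤ 1/4 := by
    nlinarith [mul_nonneg hlam0.le (sq_nonneg ‖y - x‖)]
  have h1 : ‖η - ξ‖ ^ 2 ≤ (τ ^ 2 + ‖ξ‖ ^ 2) * (1/4) := by
    calc ‖η - ξ‖ ^ 2 = (τ ^ 2 + ‖ξ‖ ^ 2) * ((τ ^ 2 + ‖ξ‖ ^ 2)⁻¹ * ‖η - ξ‖ ^ 2) := by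
          field_simp
      _ ≤ (τ ^ 2 + ‖ξ‖ ^ 2) * (1/4) := mul_le_mul_of_nonneg_left h2 hA.le
  -- triangle inequality
  have hξη : ‖ξ‖ ≤ ‖η‖ + ‖η - ξ‖ := by
    have h := norm_sub_le η (η - ξ)
    simpa using h
  have hsq : ‖ξ‖ ^ 2 ≤ 2 * ‖η‖ ^ 2 + 2 * ‖η - ξ‖ ^ 2 := by
    nlinarith [sq_nonneg (‖η‖ - ‖η - ξ‖), norm_nonneg ξ, norm_nonneg η,
      norm_nonneg (η - ξ)]
  -- key comparison: A ≤ 4 B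
  have hAB : τ ^ 2 + ‖ξ‖ ^ 2 ≤ 4 * (τ ^ 2 + ‖η‖ ^ 2) := by nlinarith
  have hinv : (τ ^ 2 + ‖η‖ ^ 2)⁻¹ ≤ 4 * (τ ^ 2 + ‖ξ‖ ^ 2)⁻¹ := by
    rw [inv_le_iff_one_le_mul₀ hB]
    have hinvA : (0:ℝ) < (τ ^ 2 + ‖ξ‖ ^ 2)⁻¹ := by positivity
    nlinarith [inv_mul_cancel₀ hA.ne', mul_le_mul_of_nonneg_left hAB hinvA.le]
  have hΞ : (τ ^ 2 + ‖η‖ ^ 2)⁻¹ * ‖Ξ‖ ^ 2 ≤ 4 * (τ ^ 2 + ‖ξ‖ ^ 2)⁻¹ * ‖Ξ‖ ^ 2 :=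
    mul_le_mul_of_nonneg_right hinv (sq_nonneg _)
  nlinarith [mul_nonneg hlam0.le (sq_nonneg ‖X‖)]
end

section
/- Fix constants 𝒞 > 0 and λ₀ > 0. There exist C > 0 and N > 0 (independent of λ and τ; the proof gives N = 2) such that for all λ ≥ λ₀, all τ ≥ max(𝒞λ, 1), and all x, y, ξ, η, X, Ξ ∈ ℝ^d: g_{x,ξ}(X, Ξ) ≤ C · g_{y,η}(X, Ξ) · (1 + g^σ_{x,ξ}(x−y, ξ−η))^N. (In other words, the metric g is temperate, uniformly in the parameters λ, τ.) -/
/-- The metric `g_{x,ξ}(X,Ξ) = λ|X|² + (τ²+|ξ|²)⁻¹|Ξ|²` is temperate with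
respect to the dual metric `g^σ_{x,ξ}(X,Ξ) = (τ²+|ξ|²)|X|² + λ⁻¹|Ξ|²`,
uniformly in the parameters `λ ≥ λ₀` and `τ ≥ max(𝒞λ, 1)`. -/
theorem metric_temperate (d : ℕ) (𝒞 lam₀ : ℝ) (h𝒞 : 0 < 𝒞) (hlam₀ : 0 < lam₀) :
    ∃ C > (0:ℝ), ∃ N : ℕ, 0 < N ∧ ∀ lam τ : ℝ, lam₀ ≤ lam → max (𝒞 * lam) 1 ≤ τ →
      ∀ x y ξ η X Ξ : EuclideanSpace ℝ (Fin d),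
        lam * ‖X‖ ^ 2 + (τ ^ 2 + ‖ξ‖ ^ 2)⁻¹ * ‖Ξ‖ ^ 2 ≤
          C * (lam * ‖X‖ ^ 2 + (τ ^ 2 + ‖η‖ ^ 2)⁻¹ * ‖Ξ‖ ^ 2) *
            (1 + ((τ ^ 2 + ‖ξ‖ ^ 2) * ‖x - y‖ ^ 2 + lam⁻¹ * ‖ξ - η‖ ^ 2)) ^ N := by
  refine ⟨2 + 2/𝒞, by positivity, 1, one_pos, ?_⟩
  intro lam τ hlam hτ x y ξ η X Ξ
  have hlam0 : 0 < lam := lt_of_lt_of_le hlam₀ hlam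
  have hτ1 : (1:ℝ) ≤ τ := le_trans (le_max_right _ _) hτ
  have hCτ : 𝒞 * lam ≤ τ := le_trans (le_max_left _ _) hτ
  have hτ0 : 0 < τ := lt_of_lt_of_le one_pos hτ1
  have hC1 : (1:ℝ) ≤ 2 + 2/𝒞 := by
    have : 0 < 2/𝒞 := by positivity
    linarith
  -- abbreviate the norms as opaque nonnegative reals
  obtain ⟨u, hu, hu0⟩ : ∃ u : ℝ, u = ‖ξ‖ ∧ 0 ≤ u := ⟨_, rfl, norm_nonneg _⟩
  obtain ⟨v, hv, hv0⟩ : ∃ v : ℝ, v = ‖η‖ ∧ 0 ≤ v := ⟨_, rfl, norm_nonneg _⟩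
  obtain ⟨w, hw, hw0⟩ : ∃ w : ℝ, w = ‖ξ - η‖ ∧ 0 ≤ w := ⟨_, rfl, norm_nonneg _⟩
  obtain ⟨p, hp, hp0⟩ : ∃ p : ℝ, p = ‖x - y‖ ∧ 0 ≤ p := ⟨_, rfl, norm_nonneg _⟩
  obtain ⟨a, ha, ha0⟩ : ∃ a : ℝ, a = ‖X‖ ∧ 0 ≤ a := ⟨_, rfl, norm_nonneg _⟩
  obtain ⟨b, hb, hb0⟩ : ∃ b : ℝ, b = ‖Ξ‖ ∧ 0 ≤ b := ⟨_, rfl, norm_nonneg _⟩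
  have hvuw : v ≤ u + w := by
    rw [hu, hv, hw]
    have h : η = ξ - (ξ - η) := by abel
    calc ‖η‖ = ‖ξ - (ξ - η)‖ := by rw [← h]
    _ ≤ ‖ξ‖ + ‖ξ - η‖ := norm_sub_le _ _
  rw [← hu, ← hv, ← hw, ← hp, ← ha, ← hb]
  -- now a purely real-variable inequality
  obtain ⟨A, hA⟩ : ∃ A : ℝ, A = τ^2 + u^2 := ⟨_, rfl⟩
  obtain ⟨B, hB⟩ : ∃ B : ℝ, B = τ^2 + v^2 := ⟨_, rfl⟩
  rw [show τ^2 + u^2 = A from hA.symm, show τ^2 + v^2 = B from hB.symm]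
  have hA0 : 0 < A := by rw [hA]; positivity
  have hB0 : 0 < B := by rw [hB]; positivity
  have hsq : v^2 ≤ 2*u^2 + 2*w^2 := by nlinarith [sq_nonneg (u - w)]
  obtain ⟨s, hs⟩ : ∃ s : ℝ, s = lam⁻¹ * w^2 := ⟨_, rfl⟩
  rw [show lam⁻¹ * w^2 = s from hs.symm]
  have hs0 : 0 ≤ s := by rw [hs]; positivity
  have hd : w^2 = lam * s := by rw [hs]; field_simp
  have hτA : τ^2 ≤ A := by rw [hA]; nlinarith [sq_nonneg u]
  have hkey : B ≤ (2 + 2/𝒞) * A * (1 + s) := by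
    have hlτ : lam ≤ τ^2/𝒞 := by
      rw [le_div_iff₀ h𝒞]; nlinarith
    have h1 : w^2 ≤ (τ^2/𝒞) * s := by
      rw [hd]; exact mul_le_mul_of_nonneg_right hlτ hs0
    have h2 : (τ^2/𝒞) * s ≤ (A/𝒞) * (1+s) := by
      have hτA' : τ^2/𝒞 ≤ A/𝒞 := div_le_div_of_nonneg_right hτA h𝒞.le
      have hApos : (0:ℝ) ≤ A/𝒞 := by positivity
      exact mul_le_mul hτA' (by linarith) hs0 hApos
    have h3 : B ≤ 2*A + 2*w^2 := by
      rw [hA, hB]; linarith [hsq, sq_nonneg τ]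
    have heq : (2 + 2/𝒞) * A * (1+s) = 2*A*(1+s) + 2*((A/𝒞)*(1+s)) := by ring
    have h4 : 2*A ≤ 2*A*(1+s) := by
      have h40 : 0 ≤ A * s := mul_nonneg hA0.le hs0
      have : 2*A*(1+s) = 2*A + 2*(A*s) := by ring
      linarith
    have h6 : 2*w^2 ≤ 2*((A/𝒞)*(1+s)) := by linarith [h1.trans h2]
    rw [heq]; linarith
  obtain ⟨S, hS⟩ : ∃ S : ℝ, S = A * p^2 + s := ⟨_, rfl⟩
  rw [show A * p^2 + s = S from hS.symm]
  have hS0 : 0 ≤ S := by rw [hS]; positivity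
  have hsS : s ≤ S := by rw [hS]; linarith [mul_nonneg hA0.le (sq_nonneg p)]
  have hkey2 : B ≤ (2 + 2/𝒞) * A * (1 + S) := by
    have hCA : (0:ℝ) ≤ (2 + 2/𝒞) * A := by positivity
    calc B ≤ (2 + 2/𝒞) * A * (1 + s) := hkey
    _ ≤ (2 + 2/𝒞) * A * (1 + S) :=
        mul_le_mul_of_nonneg_left (by linarith) hCA
  have hinv : A⁻¹ ≤ (2 + 2/𝒞) * B⁻¹ * (1 + S) := by
    have h6 : B * A⁻¹ ≤ (2 + 2/𝒞) * (1+S) := by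
      rw [← div_eq_mul_inv, div_le_iff₀ hA0]
      calc B ≤ (2 + 2/𝒞) * A * (1 + S) := hkey2
      _ = (2 + 2/𝒞) * (1+S) * A := by ring
    calc A⁻¹ = B⁻¹ * (B * A⁻¹) := by field_simp
    _ ≤ B⁻¹ * ((2 + 2/𝒞) * (1+S)) :=
        mul_le_mul_of_nonneg_left h6 (le_of_lt (inv_pos.mpr hB0))
    _ = (2 + 2/𝒞) * B⁻¹ * (1+S) := by ring
  have hXterm : lam * a^2 ≤ (2 + 2/𝒞) * (lam * a^2) * (1 + S) := by
    have h0 : 0 ≤ lam * a^2 := by positivity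
    have h7 : (1:ℝ) ≤ (2 + 2/𝒞) * (1 + S) := by
      have h8 : (1:ℝ)*1 ≤ (2 + 2/𝒞) * (1 + S) :=
        mul_le_mul hC1 (show (1:ℝ) ≤ 1 + S by linarith) zero_le_one (by linarith)
      linarith
    calc lam * a^2 = (lam * a^2) * 1 := by ring
    _ ≤ (lam * a^2) * ((2 + 2/𝒞) * (1 + S)) := mul_le_mul_of_nonneg_left h7 h0
    _ = (2 + 2/𝒞) * (lam * a^2) * (1 + S) := by ring
  have hΞterm : A⁻¹ * b^2 ≤ (2 + 2/𝒞) * (B⁻¹ * b^2) * (1 + S) := by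
    calc A⁻¹ * b^2 ≤ (2 + 2/𝒞) * B⁻¹ * (1 + S) * b^2 :=
        mul_le_mul_of_nonneg_right hinv (sq_nonneg b)
    _ = (2 + 2/𝒞) * (B⁻¹ * b^2) * (1 + S) := by ring
  calc lam * a ^ 2 + A⁻¹ * b ^ 2
      ≤ (2 + 2/𝒞) * (lam * a^2) * (1 + S) + (2 + 2/𝒞) * (B⁻¹ * b^2) * (1 + S) := by
        linarith
    _ = (2 + 2/𝒞) * (lam * a ^ 2 + B⁻¹ * b ^ 2) * (1 + S) ^ 1 := by ring
end

section
/- Let a : ℝ^d → ℝ be a nonnegative C² function with compact support. There exists δ > 0 such that for every λ > 0 and all x, y ∈ ℝ^d with λ|x−y|² ≤ δ, one has (1/2)(1 + λ a(x)) ≤ 1 + λ a(y) ≤ 2(1 + λ a(x)). (In other words, the weight 1 + λa is g-continuous, uniformly in λ.) -/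
/-!
If `∇a` is `K`-Lipschitz, Taylor's formula gives `|a y - a x - Da(x)(y - x)| ≤ K |y - x|²`.
Since `a ≥ 0`, the quadratic `t ↦ a x + t Da(x)u + K t² |u|²` is nonnegative, so its
discriminant is nonpositive: `|Da(x)u|² ≤ 4 K a(x) |u|²`. By AM-GM this yields
`|a y - a x| ≤ a x / 4 + 5 K |y - x|²`, and multiplying by `λ` with `λ |x - y|² ≤ 1 / (20 (K + 1))`
bounds `λ |a y - a x|` by `(1 + λ a x) / 2`.
-/

open scoped NNReal

variable {E F : Type*} [NormedAddCommGroup E] [NormedSpace ℝ E]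
  [NormedAddCommGroup F] [NormedSpace ℝ F]

theorem norm_sub_sub_fderiv_le_of_lipschitzWith_fderiv {f : E → F} {K : ℝ≥0}
    (hf : Differentiable ℝ f) (hK : LipschitzWith K (fderiv ℝ f)) (x y : E) :
    ‖f y - f x - fderiv ℝ f x (y - x)‖ ≤ K * ‖y - x‖ ^ 2 := by
  have hderiv : ∀ z ∈ Metric.closedBall x ‖y - x‖,
      HasFDerivWithinAt f (fderiv ℝ f z) (Metric.closedBall x ‖y - x‖) z :=
    fun z _ => (hf z).hasFDerivAt.hasFDerivWithinAt
  have hbound : ∀ z ∈ Metric.closedBall x ‖y - x‖,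
      ‖fderiv ℝ f z - fderiv ℝ f x‖ ≤ K * ‖y - x‖ := by
    intro z hz
    rw [← dist_eq_norm]
    exact (hK.dist_le_mul z x).trans (by gcongr; exact hz)
  have hy : y ∈ Metric.closedBall x ‖y - x‖ := by rw [Metric.mem_closedBall, dist_eq_norm]
  calc ‖f y - f x - fderiv ℝ f x (y - x)‖ ≤ K * ‖y - x‖ * ‖y - x‖ :=
        (convex_closedBall x ‖y - x‖).norm_image_sub_le_of_norm_hasFDerivWithin_le' hderiv
          hbound (Metric.mem_closedBall_self (norm_nonneg _)) hy
    _ = K * ‖y - x‖ ^ 2 := by ring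

theorem sq_fderiv_apply_le_of_nonneg {f : E → ℝ} {K : ℝ≥0}
    (hf : Differentiable ℝ f) (hK : LipschitzWith K (fderiv ℝ f)) (hpos : ∀ x, 0 ≤ f x)
    (x u : E) : fderiv ℝ f x u ^ 2 ≤ 4 * K * f x * ‖u‖ ^ 2 := by
  have hquad : ∀ t : ℝ, 0 ≤ (K * ‖u‖ ^ 2) * (t * t) + fderiv ℝ f x u * t + f x := by
    intro t
    have htaylor := norm_sub_sub_fderiv_le_of_lipschitzWith_fderiv hf hK x (x + t • u)
    rw [add_sub_cancel_left, map_smul, smul_eq_mul, norm_smul, Real.norm_eq_abs,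
      Real.norm_eq_abs, mul_pow, sq_abs] at htaylor
    nlinarith [abs_le.mp htaylor, hpos (x + t • u)]
  have hdisc := discrim_le_zero hquad
  rw [discrim] at hdisc
  linarith

theorem abs_sub_le_of_nonneg_of_lipschitzWith_fderiv {f : E → ℝ} {K : ℝ≥0}
    (hf : Differentiable ℝ f) (hK : LipschitzWith K (fderiv ℝ f)) (hpos : ∀ x, 0 ≤ f x)
    (x y : E) : |f y - f x| ≤ f x / 4 + 5 * K * ‖y - x‖ ^ 2 := by
  have hlinear : |fderiv ℝ f x (y - x)| ≤ f x / 4 + 4 * K * ‖y - x‖ ^ 2 := by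
    refine abs_le_of_sq_le_sq ?_ (by have := hpos x; positivity)
    calc fderiv ℝ f x (y - x) ^ 2 ≤ 4 * K * f x * ‖y - x‖ ^ 2 :=
          sq_fderiv_apply_le_of_nonneg hf hK hpos x (y - x)
      _ = 4 * (f x / 4) * (4 * K * ‖y - x‖ ^ 2) := by ring
      _ ≤ _ := four_mul_le_sq_add _ _
  have htaylor := norm_sub_sub_fderiv_le_of_lipschitzWith_fderiv hf hK x y
  rw [Real.norm_eq_abs] at htaylor
  linarith [abs_sub_abs_le_abs_sub (f y - f x) (fderiv ℝ f x (y - x))]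

/-- For a nonnegative `C²` function `a` with compact support, the weight
`1 + λ a` is `g`-continuous uniformly in `λ > 0`: there is `δ > 0` such that
`λ|x-y|² ≤ δ` implies `(1/2)(1 + λ a(x)) ≤ 1 + λ a(y) ≤ 2(1 + λ a(x))`. -/
theorem weight_g_continuous (d : ℕ) (a : EuclideanSpace ℝ (Fin d) → ℝ)
    (ha : ContDiff ℝ 2 a) (hsupp : HasCompactSupport a) (hpos : ∀ x, 0 ≤ a x) :
    ∃ δ > (0:ℝ), ∀ lam : ℝ, 0 < lam → ∀ x y : EuclideanSpace ℝ (Fin d),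
      lam * ‖x - y‖ ^ 2 ≤ δ →
        (1 / 2) * (1 + lam * a x) ≤ 1 + lam * a y ∧
          1 + lam * a y ≤ 2 * (1 + lam * a x) := by
  obtain ⟨K, hK⟩ := (ha.fderiv_right (m := 1) (by norm_num)).lipschitzWith_of_hasCompactSupport
    (hsupp.fderiv ℝ) one_ne_zero
  refine ⟨1 / (20 * (K + 1)), by positivity, fun lam hlam x y hxy => ?_⟩
  have hosc := abs_sub_le_of_nonneg_of_lipschitzWith_fderiv (ha.differentiable two_ne_zero)
    hK hpos x y
  have hsmall : lam * (5 * K * ‖y - x‖ ^ 2) ≤ 1 / 4 := by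
    rw [norm_sub_rev, le_div_iff₀ (by positivity)] at hxy
    nlinarith [mul_nonneg hlam.le (sq_nonneg ‖y - x‖)]
  have hweighted : |lam * (a y - a x)| ≤ lam * a x / 4 + 1 / 4 := by
    rw [abs_mul, abs_of_pos hlam]
    nlinarith [mul_le_mul_of_nonneg_left hosc hlam.le]
  obtain ⟨hlower, hupper⟩ := abs_le.mp hweighted
  have hweight_nonneg := mul_nonneg hlam.le (hpos x)
  constructor <;> linarith
end

section
/- Let a : ℝ^d → ℝ be a nonnegative C¹ function with compact support and with bounded gradient, and fix 𝒞 > 0. There exists C > 0 such that for all λ > 0, all τ ≥ max(𝒞λ, 1), and all x, y ∈ ℝ^d: 1 + λ a(y) ≤ C (1 + λ a(x)) (1 + τ²|x−y|²)^{1/2}. (In other words, the weight 1 + λa is g-temperate.) -/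
/-! By the mean value theorem `a` is `M`-Lipschitz, so
`1 + λ a(y) ≤ (1 + λ a(x)) + λ M |x - y|`, and `λ ≤ τ / 𝒞` turns the last term into
`(M / 𝒞) τ |x - y|`. Since `1 + λ a(x) ≥ 1` and both `1` and `τ |x - y|` are at most
`√(1 + τ² |x - y|²)`, the constant `C = 1 + M / 𝒞` works. -/

theorem sub_le_mul_norm_sub_of_norm_fderiv_le {E : Type*} [NormedAddCommGroup E]
    [NormedSpace ℝ E] {f : E → ℝ} {M : ℝ} (hf : Differentiable ℝ f)
    (hM : ∀ x, ‖fderiv ℝ f x‖ ≤ M) (x y : E) : f y - f x ≤ M * ‖x - y‖ := by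
  have hnorm : ‖f y - f x‖ ≤ M * ‖y - x‖ :=
    convex_univ.norm_image_sub_le_of_norm_fderiv_le (fun z _ => hf z) (fun z _ => hM z)
      (Set.mem_univ x) (Set.mem_univ y)
  rw [norm_sub_rev y x] at hnorm
  exact (le_abs_self _).trans hnorm

theorem add_mul_le_mul_sqrt_one_add_sq {u L t : ℝ} (hu : 1 ≤ u) (hL : 0 ≤ L) :
    u + L * t ≤ (1 + L) * u * √(1 + t ^ 2) := by
  have hone : 1 ≤ √(1 + t ^ 2) := Real.one_le_sqrt.mpr (by nlinarith [sq_nonneg t])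
  have ht : t ≤ √(1 + t ^ 2) := Real.le_sqrt_of_sq_le (by linarith)
  calc u + L * t ≤ u * √(1 + t ^ 2) + L * (u * √(1 + t ^ 2)) := by
        gcongr
        · nlinarith
        · nlinarith
    _ = (1 + L) * u * √(1 + t ^ 2) := by ring

theorem weight_g_temperate_general (d : ℕ) (a : EuclideanSpace ℝ (Fin d) → ℝ)
    (ha : ContDiff ℝ 1 a) (hpos : ∀ x, 0 ≤ a x)
    (hgrad : ∃ M : ℝ, ∀ x, ‖fderiv ℝ a x‖ ≤ M)
    (𝒞 : ℝ) (h𝒞 : 0 < 𝒞) :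
    ∃ C > (0:ℝ), ∀ lam τ : ℝ, 0 < lam → max (𝒞 * lam) 1 ≤ τ →
      ∀ x y : EuclideanSpace ℝ (Fin d),
        1 + lam * a y ≤ C * (1 + lam * a x) * Real.sqrt (1 + τ ^ 2 * ‖x - y‖ ^ 2) := by
  obtain ⟨M, hM⟩ := hgrad
  set K := max M 0 / 𝒞
  have hK : 0 ≤ K := by positivity
  refine ⟨1 + K, by positivity, fun lam τ hlam hτ x y => ?_⟩
  have hlip : a y - a x ≤ max M 0 * ‖x - y‖ :=
    sub_le_mul_norm_sub_of_norm_fderiv_le (ha.differentiable one_ne_zero)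
      (fun z => (hM z).trans (le_max_left _ _)) x y
  have hlamK : lam * max M 0 ≤ K * τ := by
    rw [div_mul_eq_mul_div, le_div_iff₀ h𝒞]
    nlinarith [le_of_max_le_left hτ, le_max_right M 0]
  calc 1 + lam * a y ≤ (1 + lam * a x) + K * (τ * ‖x - y‖) := by
        nlinarith [mul_le_mul_of_nonneg_left hlip hlam.le, norm_nonneg (x - y)]
    _ ≤ (1 + K) * (1 + lam * a x) * √(1 + (τ * ‖x - y‖) ^ 2) :=
        add_mul_le_mul_sqrt_one_add_sq (by nlinarith [hpos x]) hK
    _ = (1 + K) * (1 + lam * a x) * √(1 + τ ^ 2 * ‖x - y‖ ^ 2) := by rw [mul_pow]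

/-- For a nonnegative `C¹` function `a` with compact support and bounded
gradient, the weight `1 + λ a` is `g`-temperate: there is `C > 0` such that for all
`λ > 0`, `τ ≥ max(𝒞λ,1)` and all `x, y`,
`1 + λ a(y) ≤ C (1 + λ a(x)) (1 + τ²|x-y|²)^{1/2}`. -/
theorem weight_g_temperate (d : ℕ) (a : EuclideanSpace ℝ (Fin d) → ℝ)
    (ha : ContDiff ℝ 1 a) (hsupp : HasCompactSupport a) (hpos : ∀ x, 0 ≤ a x)
    (hgrad : ∃ M : ℝ, ∀ x, ‖fderiv ℝ a x‖ ≤ M)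
    (𝒞 : ℝ) (h𝒞 : 0 < 𝒞) :
    ∃ C > (0:ℝ), ∀ lam τ : ℝ, 0 < lam → max (𝒞 * lam) 1 ≤ τ →
      ∀ x y : EuclideanSpace ℝ (Fin d),
        1 + lam * a y ≤ C * (1 + lam * a x) * Real.sqrt (1 + τ ^ 2 * ‖x - y‖ ^ 2) :=
  weight_g_temperate_general d a ha hpos hgrad 𝒞 h𝒞
end

section
/- Let a : ℝ^d → ℝ be a nonnegative C² function whose second derivative is bounded, with M := sup_{x∈ℝ^d} ‖a''(x)‖ < ∞ (operator norm of the Hessian). Then for every x ∈ ℝ^d, |∇a(x)|² ≤ 2 M a(x). -/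
/-!
A bound `M` on the second derivative makes `f'` `M`-Lipschitz, which along a line gives the upper
bound `f (x + t • h) ≤ f x + t f'(x) h + M t² ‖h‖² / 2`. When `f ≥ 0` this quadratic in `t` is
nonnegative for every `t`, so its discriminant is nonpositive: `(f'(x) h)² ≤ 2 M f(x) ‖h‖²`.
Taking the supremum over `h` bounds `‖f'(x)‖² = ‖∇f(x)‖²` by `2 M f(x)`.
-/

section

variable {E : Type*} [NormedAddCommGroup E] [NormedSpace ℝ E] {f : E → ℝ} {M : ℝ} {x : E}

theorem image_add_le_of_norm_fderiv_sub_le (hf : Differentiable ℝ f)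
    (hlip : ∀ y, ‖fderiv ℝ f y - fderiv ℝ f x‖ ≤ M * ‖y - x‖) (h : E) :
    f (x + h) ≤ f x + fderiv ℝ f x h + M / 2 * ‖h‖ ^ 2 := by
  set φ : ℝ → ℝ := fun t => f (x + t • h) - t * fderiv ℝ f x h - M / 2 * t ^ 2 * ‖h‖ ^ 2
  have hφ : ∀ t, HasDerivAt φ (fderiv ℝ f (x + t • h) h - fderiv ℝ f x h - M * t * ‖h‖ ^ 2) t := by
    intro t
    have hline : HasDerivAt (fun t : ℝ => x + t • h) h t := by
      simpa using ((hasDerivAt_id t).smul_const h).const_add x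
    exact ((((hf _).hasFDerivAt.comp_hasDerivAt t hline).sub
      ((hasDerivAt_id t).mul_const (fderiv ℝ f x h))).sub
      (((hasDerivAt_pow 2 t).const_mul (M / 2)).mul_const (‖h‖ ^ 2))).congr_deriv (by ring)
  have hφ_deriv_nonpos : ∀ t ∈ interior (Set.Icc (0 : ℝ) 1), deriv φ t ≤ 0 := by
    intro t ht
    rw [interior_Icc] at ht
    rw [(hφ t).deriv, sub_nonpos]
    calc fderiv ℝ f (x + t • h) h - fderiv ℝ f x h
        = (fderiv ℝ f (x + t • h) - fderiv ℝ f x) h := rfl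
      _ ≤ ‖fderiv ℝ f (x + t • h) - fderiv ℝ f x‖ * ‖h‖ :=
        (Real.le_norm_self _).trans (ContinuousLinearMap.le_opNorm _ _)
      _ ≤ M * ‖t • h‖ * ‖h‖ := by gcongr; simpa using hlip (x + t • h)
      _ = M * t * ‖h‖ ^ 2 := by rw [norm_smul, Real.norm_of_nonneg ht.1.le]; ring
  have hφ_le := antitoneOn_of_deriv_nonpos (convex_Icc 0 1)
    (fun t _ => (hφ t).continuousAt.continuousWithinAt)
    (fun t _ => (hφ t).differentiableAt.differentiableWithinAt) hφ_deriv_nonpos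
    (Set.left_mem_Icc.2 zero_le_one) (Set.right_mem_Icc.2 zero_le_one) zero_le_one
  simp only [φ, one_smul, one_mul, one_pow, zero_smul, add_zero, zero_mul, sub_zero,
    ne_eq, OfNat.ofNat_ne_zero, not_false_eq_true, zero_pow, mul_zero] at hφ_le
  linarith

theorem sq_norm_fderiv_le_of_nonneg (hM : 0 ≤ M) (hpos : ∀ y, 0 ≤ f y)
    (hquad : ∀ h, f (x + h) ≤ f x + fderiv ℝ f x h + M / 2 * ‖h‖ ^ 2) :
    ‖fderiv ℝ f x‖ ^ 2 ≤ 2 * M * f x := by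
  have hfx : 0 ≤ 2 * M * f x := by have := hpos x; positivity
  have hbound : ∀ h, |fderiv ℝ f x h| ≤ √(2 * M * f x) * ‖h‖ := by
    intro h
    have hdisc := discrim_le_zero (a := M / 2 * ‖h‖ ^ 2) (b := fderiv ℝ f x h) (c := f x)
      fun t => by
        have := (hpos (x + t • h)).trans (hquad (t • h))
        rw [map_smul, smul_eq_mul, norm_smul, Real.norm_eq_abs, mul_pow, sq_abs] at this
        linarith
    rw [discrim] at hdisc
    rw [← Real.sqrt_sq (norm_nonneg h), ← Real.sqrt_mul hfx]
    exact Real.abs_le_sqrt (by linarith)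
  exact (Real.le_sqrt (norm_nonneg _) hfx).1
    ((fderiv ℝ f x).opNorm_le_bound (Real.sqrt_nonneg _) hbound)

end

/-- If `a : ℝ^d → ℝ` is a nonnegative `C²` function whose Hessian has
operator norm bounded by `M` everywhere, then `|∇a(x)|² ≤ 2 M a(x)` for every `x`. -/
theorem gradient_sq_le_of_nonneg (d : ℕ) (a : EuclideanSpace ℝ (Fin d) → ℝ)
    (ha : ContDiff ℝ 2 a) (hpos : ∀ x, 0 ≤ a x) (M : ℝ)
    (hM : ∀ x, ‖fderiv ℝ (fderiv ℝ a) x‖ ≤ M) :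
    ∀ x, ‖gradient a x‖ ^ 2 ≤ 2 * M * a x := by
  intro x
  have hda' : Differentiable ℝ (fderiv ℝ a) :=
    (ha.fderiv_right (m := 1) (by norm_num)).differentiable (by norm_num)
  have hlip : ∀ y, ‖fderiv ℝ a y - fderiv ℝ a x‖ ≤ M * ‖y - x‖ := fun y =>
    convex_univ.norm_image_sub_le_of_norm_fderiv_le (fun z _ => hda' z) (fun z _ => hM z)
      trivial trivial
  have hM_nonneg : 0 ≤ M := (norm_nonneg (fderiv ℝ (fderiv ℝ a) x)).trans (hM x)
  rw [gradient, LinearIsometryEquiv.norm_map]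
  exact sq_norm_fderiv_le_of_nonneg hM_nonneg hpos
    (image_add_le_of_norm_fderiv_sub_le (ha.differentiable (by norm_num)) hlip)
end

section
/- Let V ⊂ ℝ^d be a bounded open set and ψ ∈ C^∞(ℝ^d; ℝ) be such that |∇ψ(x)| > 0 for all x in the closure of V. Then there exists γ₀ > 0 such that for every γ ≥ γ₀, the function φ = e^{γψ} satisfies the sub-ellipticity condition on the closure of V; that is, |∇φ| > 0 on the closure of V and there exists C > 0 such that for every x in the closure of V, every ξ ∈ ℝ^d and every τ > 0 with |ξ|² = τ²|∇φ(x)|² and ξ·∇φ(x) = 0, one has 4τ⟨φ''(x)ξ, ξ⟩ + 4τ³⟨φ''(x)∇φ(x), ∇φ(x)⟩ ≥ C (|ξ|² + τ²)^{3/2}. -/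
open scoped RealInnerProductSpace

variable {E : Type*} [NormedAddCommGroup E] [InnerProductSpace ℝ E] [CompleteSpace E]

lemma expPsi_hasFDerivAt (ψ : E → ℝ) (hψ : Differentiable ℝ ψ) (γ : ℝ) (x : E) :
    HasFDerivAt (fun z => Real.exp (γ * ψ z)) ((γ * Real.exp (γ * ψ x)) • fderiv ℝ ψ x) x := by
  have h1 : HasFDerivAt (fun z => γ * ψ z) (γ • fderiv ℝ ψ x) x :=
    (hψ x).hasFDerivAt.const_mul γ
  have h2 := (Real.hasDerivAt_exp (γ * ψ x)).comp_hasFDerivAt x h1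
  have h3 : (Real.exp (γ * ψ x)) • (γ • fderiv ℝ ψ x)
      = (γ * Real.exp (γ * ψ x)) • fderiv ℝ ψ x := by rw [smul_smul, mul_comm]
  simpa [Function.comp_def, h3] using h2

lemma expPsi_fderiv (ψ : E → ℝ) (hψ : Differentiable ℝ ψ) (γ : ℝ) (x : E) :
    fderiv ℝ (fun z => Real.exp (γ * ψ z)) x = (γ * Real.exp (γ * ψ x)) • fderiv ℝ ψ x :=
  (expPsi_hasFDerivAt ψ hψ γ x).fderiv

lemma expPsi_gradient (ψ : E → ℝ) (hψ : Differentiable ℝ ψ) (γ : ℝ) (x : E) :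
    gradient (fun z => Real.exp (γ * ψ z)) x = (γ * Real.exp (γ * ψ x)) • gradient ψ x := by
  unfold gradient
  rw [expPsi_fderiv ψ hψ γ x, map_smul]

lemma fderiv_apply_eq_inner (ψ : E → ℝ) (x v : E) :
    fderiv ℝ ψ x v = ⟪gradient ψ x, v⟫ := by
  rw [gradient, InnerProductSpace.toDual_symm_apply]

lemma gradient_norm_eq (ψ : E → ℝ) (x : E) : ‖gradient ψ x‖ = ‖fderiv ℝ ψ x‖ := by
  rw [gradient]; exact LinearIsometryEquiv.norm_map _ _

lemma expPsi_hessian (ψ : E → ℝ) (hψ : ContDiff ℝ (⊤ : ℕ∞) ψ) (γ : ℝ) (x : E) :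
    fderiv ℝ (fderiv ℝ (fun z => Real.exp (γ * ψ z))) x =
      (γ * Real.exp (γ * ψ x)) • fderiv ℝ (fderiv ℝ ψ) x +
      ((γ ^ 2 * Real.exp (γ * ψ x)) • fderiv ℝ ψ x).smulRight (fderiv ℝ ψ x) := by
  have hd : Differentiable ℝ ψ := hψ.differentiable (by simp)
  have hfun : fderiv ℝ (fun z => Real.exp (γ * ψ z)) =
      fun z => (γ * Real.exp (γ * ψ z)) • fderiv ℝ ψ z :=
    funext fun z => expPsi_fderiv ψ hd γ z
  rw [hfun]
  have hc : HasFDerivAt (fun z => γ * Real.exp (γ * ψ z))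
      ((γ ^ 2 * Real.exp (γ * ψ x)) • fderiv ℝ ψ x) x := by
    have := (expPsi_hasFDerivAt ψ hd γ x).const_mul γ
    have h4 : γ • ((γ * Real.exp (γ * ψ x)) • fderiv ℝ ψ x)
        = (γ ^ 2 * Real.exp (γ * ψ x)) • fderiv ℝ ψ x := by rw [smul_smul]; ring_nf
    simpa [h4] using this
  have hf : DifferentiableAt ℝ (fderiv ℝ ψ) x :=
    ((hψ.fderiv_right (m := (⊤ : ℕ∞)) (by simp)).differentiable (by simp)) x
  rw [fderiv_fun_smul hc.differentiableAt hf, hc.fderiv]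

set_option maxHeartbeats 4000000 in
/-- If `ψ` is smooth with nonvanishing gradient on the closure of a bounded
open set `V`, then for `γ` large enough the function `φ = e^{γψ}` satisfies the
sub-ellipticity condition on the closure of `V`: `|∇φ| > 0` there, and on the
characteristic set `|ξ|² = τ²|∇φ|²`, `ξ·∇φ = 0` one has
`4τ⟨φ''ξ,ξ⟩ + 4τ³⟨φ''∇φ,∇φ⟩ ≥ C(|ξ|² + τ²)^{3/2}`. -/
theorem exp_weight_subelliptic (d : ℕ) (V : Set (EuclideanSpace ℝ (Fin d)))
    (hVopen : IsOpen V) (hVbdd : Bornology.IsBounded V)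
    (ψ : EuclideanSpace ℝ (Fin d) → ℝ) (hψ : ContDiff ℝ (⊤ : ℕ∞) ψ)
    (hψgrad : ∀ x ∈ closure V, 0 < ‖gradient ψ x‖) :
    ∃ γ₀ > (0:ℝ), ∀ γ : ℝ, γ₀ ≤ γ →
      (∀ x ∈ closure V, 0 < ‖gradient (fun z => Real.exp (γ * ψ z)) x‖) ∧
      ∃ C > (0:ℝ), ∀ x ∈ closure V, ∀ ξ : EuclideanSpace ℝ (Fin d), ∀ τ : ℝ, 0 < τ →
        ‖ξ‖ ^ 2 = τ ^ 2 * ‖gradient (fun z => Real.exp (γ * ψ z)) x‖ ^ 2 →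
        ⟪ξ, gradient (fun z => Real.exp (γ * ψ z)) x⟫ = 0 →
        C * (‖ξ‖ ^ 2 + τ ^ 2) ^ ((3:ℝ) / 2) ≤
          4 * τ * (fderiv ℝ (fderiv ℝ (fun z => Real.exp (γ * ψ z))) x ξ ξ) +
            4 * τ ^ 3 *
              (fderiv ℝ (fderiv ℝ (fun z => Real.exp (γ * ψ z))) x
                (gradient (fun z => Real.exp (γ * ψ z)) x)
                (gradient (fun z => Real.exp (γ * ψ z)) x)) := by
  have hd : Differentiable ℝ ψ := hψ.differentiable (by simp)
  rcases (closure V).eq_empty_or_nonempty with hemp | hne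
  · refine ⟨1, one_pos, fun γ hγ => ⟨?_, 1, one_pos, ?_⟩⟩ <;>
      · intro x hx; rw [hemp] at hx; exact absurd hx (Set.notMem_empty x)
  -- compactness bounds
  have hK : IsCompact (closure V) := hVbdd.isCompact_closure
  have cont1 : Continuous fun x => ‖fderiv ℝ ψ x‖ := (hψ.continuous_fderiv (by simp)).norm
  have cont2 : Continuous fun x => ‖fderiv ℝ (fderiv ℝ ψ) x‖ :=
    ((hψ.fderiv_right (m := (⊤ : ℕ∞)) (by simp)).continuous_fderiv (by simp)).norm
  have cont3 : Continuous fun x => |ψ x| := hψ.continuous.abs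
  obtain ⟨xm, hxm, hmin⟩ := hK.exists_isMinOn hne cont1.continuousOn
  obtain ⟨xL, hxL, hLmax⟩ := hK.exists_isMaxOn hne cont1.continuousOn
  obtain ⟨xM, hxM, hMmax⟩ := hK.exists_isMaxOn hne cont2.continuousOn
  obtain ⟨xB, hxB, hBmax⟩ := hK.exists_isMaxOn hne cont3.continuousOn
  set m := ‖fderiv ℝ ψ xm‖ with hm_def
  set L := ‖fderiv ℝ ψ xL‖ with hL_def
  set M := ‖fderiv ℝ (fderiv ℝ ψ) xM‖ with hM_def
  set B := |ψ xB| with hB_def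
  have hm : 0 < m := by
    have := hψgrad xm hxm; rwa [gradient_norm_eq] at this
  have hL0 : 0 ≤ L := norm_nonneg _
  have hM0 : 0 ≤ M := norm_nonneg (fderiv ℝ (fderiv ℝ ψ) xM)
  have hB0 : 0 ≤ B := abs_nonneg _
  have hmL : m ≤ L := hLmax hxm
  refine ⟨1 + (2 * M * L ^ 2 + m ^ 4) / m ^ 4, by positivity, fun γ hγ => ?_⟩
  have hγ1 : (1:ℝ) ≤ γ := le_trans (le_add_of_nonneg_right (by positivity)) hγ
  have hγ0 : (0:ℝ) < γ := lt_of_lt_of_le one_pos hγ1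
  have hγkey : 2 * M * L ^ 2 + m ^ 4 ≤ γ * m ^ 4 := by
    have h1 : (1 + (2 * M * L ^ 2 + m ^ 4) / m ^ 4) * m ^ 4 ≤ γ * m ^ 4 :=
      mul_le_mul_of_nonneg_right hγ (by positivity)
    have h2 : (1 + (2 * M * L ^ 2 + m ^ 4) / m ^ 4) * m ^ 4
        = m ^ 4 + (2 * M * L ^ 2 + m ^ 4) := by
      field_simp
    have hm4 : (0:ℝ) < m ^ 4 := pow_pos hm 4
    linarith
  constructor
  · intro x hx
    rw [expPsi_gradient ψ hd γ x, norm_smul]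
    have hgx := hψgrad x hx
    have he : 0 < Real.exp (γ * ψ x) := Real.exp_pos _
    rw [Real.norm_eq_abs]
    exact mul_pos (abs_pos.2 (mul_pos hγ0 he).ne') hgx
  -- the constant
  set S := 1 + γ ^ 2 * Real.exp (γ * B) ^ 2 * L ^ 2 with hS_def
  have hS : 0 < S := by positivity
  have hS32 : (0:ℝ) < S ^ ((3:ℝ)/2) := Real.rpow_pos_of_pos hS _
  refine ⟨4 * γ ^ 3 * Real.exp (-(γ * B)) ^ 3 * m ^ 4 / S ^ ((3:ℝ)/2), by positivity,
    fun x hx ξ τ hτ hchar horth => ?_⟩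
  set e := Real.exp (γ * ψ x) with he_def
  have he0 : 0 < e := Real.exp_pos _
  set n := gradient ψ x with hn_def
  set D := fderiv ℝ ψ x with hD_def
  set Ψ := fderiv ℝ (fderiv ℝ ψ) x with hΨ_def
  have hgr : gradient (fun z => Real.exp (γ * ψ z)) x = (γ * e) • n :=
    expPsi_gradient ψ hd γ x
  have hψx : |ψ x| ≤ B := hBmax hx
  have he1 : Real.exp (-(γ * B)) ≤ e := by
    apply Real.exp_le_exp.2
    have hb := (abs_le.1 hψx).1
    calc -(γ * B) = γ * (-B) := by ring
      _ ≤ γ * ψ x := mul_le_mul_of_nonneg_left hb hγ0.le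
  have he2 : e ≤ Real.exp (γ * B) := by
    apply Real.exp_le_exp.2
    exact mul_le_mul_of_nonneg_left (abs_le.1 hψx).2 hγ0.le
  have hnm : m ≤ ‖n‖ := by rw [hn_def, gradient_norm_eq]; exact hmin hx
  have hnL : ‖n‖ ≤ L := by rw [hn_def, gradient_norm_eq]; exact hLmax hx
  have hMb : ‖Ψ‖ ≤ M := hMmax hx
  -- characteristic set facts
  rw [hgr] at hchar horth
  rw [norm_smul, mul_pow, Real.norm_eq_abs, sq_abs] at hchar
  have horth' : ⟪ξ, n⟫ = 0 := by
    rw [real_inner_smul_right] at horth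
    have : γ * e ≠ 0 := by positivity
    exact (mul_eq_zero.1 horth).resolve_left this
  have hDξ : D ξ = 0 := by
    rw [hD_def, fderiv_apply_eq_inner, ← hn_def, real_inner_comm]; exact horth'
  have hDn : D n = ‖n‖ ^ 2 := by
    rw [hD_def, fderiv_apply_eq_inner, ← hn_def, real_inner_self_eq_norm_sq]
  -- hessian values
  have hH := expPsi_hessian ψ hψ γ x
  rw [← he_def, ← hD_def, ← hΨ_def] at hH
  have happξ : fderiv ℝ (fderiv ℝ (fun z => Real.exp (γ * ψ z))) x ξ ξ
      = (γ * e) * (Ψ ξ ξ) := by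
    rw [hH]
    simp [ContinuousLinearMap.add_apply, ContinuousLinearMap.smul_apply,
      ContinuousLinearMap.smulRight_apply, smul_eq_mul, hDξ]
  have happg : fderiv ℝ (fderiv ℝ (fun z => Real.exp (γ * ψ z))) x ((γ * e) • n) ((γ * e) • n)
      = (γ * e) ^ 2 * ((γ * e) * (Ψ n n) + (γ ^ 2 * e) * ‖n‖ ^ 4) := by
    rw [hH]
    simp [ContinuousLinearMap.add_apply, ContinuousLinearMap.smul_apply,
      ContinuousLinearMap.smulRight_apply, ContinuousLinearMap.map_smul, smul_eq_mul, hDn]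
    ring
  rw [hgr, happξ, happg]
  -- bounds on hessian entries
  have hΨξξ : |Ψ ξ ξ| ≤ M * ‖ξ‖ ^ 2 := by
    calc |Ψ ξ ξ| = ‖Ψ ξ ξ‖ := (Real.norm_eq_abs _).symm
    _ ≤ ‖Ψ ξ‖ * ‖ξ‖ := (Ψ ξ).le_opNorm ξ
    _ ≤ (‖Ψ‖ * ‖ξ‖) * ‖ξ‖ := by
        have := Ψ.le_opNorm ξ
        exact mul_le_mul_of_nonneg_right this (norm_nonneg _)
    _ = ‖Ψ‖ * (‖ξ‖ * ‖ξ‖) := by ring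
    _ ≤ M * (‖ξ‖ * ‖ξ‖) := mul_le_mul_of_nonneg_right hMb (by positivity)
    _ = M * ‖ξ‖ ^ 2 := by ring
  have hΨnn : |Ψ n n| ≤ M * L ^ 2 := by
    calc |Ψ n n| = ‖Ψ n n‖ := (Real.norm_eq_abs _).symm
    _ ≤ ‖Ψ n‖ * ‖n‖ := (Ψ n).le_opNorm n
    _ ≤ (‖Ψ‖ * ‖n‖) * ‖n‖ := by
        have := Ψ.le_opNorm n
        exact mul_le_mul_of_nonneg_right this (norm_nonneg _)
    _ = ‖Ψ‖ * (‖n‖ * ‖n‖) := by ring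
    _ ≤ M * (L * L) := mul_le_mul hMb (mul_le_mul hnL hnL (norm_nonneg n) hL0) (by positivity) hM0
    _ = M * L ^ 2 := by ring
  -- lower bound for the quadratic form
  have hQ : 4 * τ ^ 3 * γ ^ 3 * e ^ 3 * m ^ 4 ≤
      4 * τ * ((γ * e) * (Ψ ξ ξ)) +
        4 * τ ^ 3 * ((γ * e) ^ 2 * ((γ * e) * (Ψ n n) + (γ ^ 2 * e) * ‖n‖ ^ 4)) := by
    have habs1 := abs_le.1 hΨξξ
    have habs2 := abs_le.1 hΨnn
    have h1 : -(4 * τ ^ 3 * γ ^ 3 * e ^ 3 * M * L ^ 2) ≤ 4 * τ * ((γ * e) * (Ψ ξ ξ)) := by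
      have e1 : 4 * τ * ((γ * e) * (Ψ ξ ξ)) = (4 * τ * γ * e) * Ψ ξ ξ := by ring
      rw [e1]
      have e2 : -(4 * τ ^ 3 * γ ^ 3 * e ^ 3 * M * L ^ 2) ≤ (4 * τ * γ * e) * (-(M * ‖ξ‖ ^ 2)) := by
        have hξ2 : ‖ξ‖ ^ 2 = τ ^ 2 * (γ ^ 2 * e ^ 2 * ‖n‖ ^ 2) := by rw [hchar]; ring
        rw [hξ2]
        have hnL2 : ‖n‖ ^ 2 ≤ L ^ 2 := pow_le_pow_left₀ (norm_nonneg n) hnL 2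
        have hc : (0:ℝ) ≤ 4 * τ ^ 3 * γ ^ 3 * e ^ 3 * M := by positivity
        have e3 : (4 * τ * γ * e) * (-(M * (τ ^ 2 * (γ ^ 2 * e ^ 2 * ‖n‖ ^ 2))))
            = -(4 * τ ^ 3 * γ ^ 3 * e ^ 3 * M * ‖n‖ ^ 2) := by ring
        rw [e3]
        exact neg_le_neg (mul_le_mul_of_nonneg_left hnL2 hc)
      exact le_trans e2 (mul_le_mul_of_nonneg_left habs1.1 (by positivity))
    have h2 : -(4 * τ ^ 3 * γ ^ 3 * e ^ 3 * M * L ^ 2) ≤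
        4 * τ ^ 3 * ((γ * e) ^ 2 * ((γ * e) * (Ψ n n))) := by
      have e1 : 4 * τ ^ 3 * ((γ * e) ^ 2 * ((γ * e) * (Ψ n n)))
          = (4 * τ ^ 3 * γ ^ 3 * e ^ 3) * Ψ n n := by ring
      rw [e1]
      have hc : (0:ℝ) ≤ 4 * τ ^ 3 * γ ^ 3 * e ^ 3 := by positivity
      have e2 : -(4 * τ ^ 3 * γ ^ 3 * e ^ 3 * M * L ^ 2)
          = (4 * τ ^ 3 * γ ^ 3 * e ^ 3) * (-(M * L ^ 2)) := by ring
      rw [e2]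
      exact mul_le_mul_of_nonneg_left habs2.1 hc
    have h3 : 4 * τ ^ 3 * γ ^ 3 * e ^ 3 * (2 * M * L ^ 2 + m ^ 4) ≤
        4 * τ ^ 3 * ((γ * e) ^ 2 * ((γ ^ 2 * e) * ‖n‖ ^ 4)) := by
      have hn4 : m ^ 4 ≤ ‖n‖ ^ 4 := pow_le_pow_left₀ (le_of_lt hm) hnm 4
      have hpos : (0:ℝ) < 4 * τ ^ 3 * γ ^ 3 * e ^ 3 := by positivity
      calc 4 * τ ^ 3 * γ ^ 3 * e ^ 3 * (2 * M * L ^ 2 + m ^ 4)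
          ≤ 4 * τ ^ 3 * γ ^ 3 * e ^ 3 * (γ * m ^ 4) :=
            mul_le_mul_of_nonneg_left hγkey (le_of_lt hpos)
        _ ≤ 4 * τ ^ 3 * γ ^ 3 * e ^ 3 * (γ * ‖n‖ ^ 4) :=
            mul_le_mul_of_nonneg_left
              (mul_le_mul_of_nonneg_left hn4 (le_of_lt hγ0)) (le_of_lt hpos)
        _ = 4 * τ ^ 3 * ((γ * e) ^ 2 * ((γ ^ 2 * e) * ‖n‖ ^ 4)) := by ring
    linarith [h1, h2, h3]
  -- rpow manipulation of the right-hand side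
  have hnormg : ‖(γ * e) • n‖ ^ 2 = γ ^ 2 * e ^ 2 * ‖n‖ ^ 2 := by
    rw [norm_smul, mul_pow, Real.norm_eq_abs, sq_abs]; ring
  have hsum : ‖ξ‖ ^ 2 + τ ^ 2 ≤ τ ^ 2 * S := by
    have h1 : e ^ 2 ≤ Real.exp (γ * B) ^ 2 := pow_le_pow_left₀ he0.le he2 2
    have h2 : ‖n‖ ^ 2 ≤ L ^ 2 := pow_le_pow_left₀ (norm_nonneg n) hnL 2
    have h3 : γ ^ 2 * e ^ 2 * ‖n‖ ^ 2 ≤ γ ^ 2 * Real.exp (γ * B) ^ 2 * L ^ 2 := by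
      have h4 : e ^ 2 * ‖n‖ ^ 2 ≤ Real.exp (γ * B) ^ 2 * L ^ 2 :=
        mul_le_mul h1 h2 (sq_nonneg _) (sq_nonneg _)
      calc γ ^ 2 * e ^ 2 * ‖n‖ ^ 2 = γ ^ 2 * (e ^ 2 * ‖n‖ ^ 2) := by ring
        _ ≤ γ ^ 2 * (Real.exp (γ * B) ^ 2 * L ^ 2) :=
            mul_le_mul_of_nonneg_left h4 (sq_nonneg γ)
        _ = γ ^ 2 * Real.exp (γ * B) ^ 2 * L ^ 2 := by ring
    calc ‖ξ‖ ^ 2 + τ ^ 2 = τ ^ 2 * (γ ^ 2 * e ^ 2 * ‖n‖ ^ 2) + τ ^ 2 := by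
          rw [hchar]; ring
      _ ≤ τ ^ 2 * (γ ^ 2 * Real.exp (γ * B) ^ 2 * L ^ 2) + τ ^ 2 :=
          add_le_add_left (mul_le_mul_of_nonneg_left h3 (sq_nonneg τ)) _
      _ = τ ^ 2 * S := by rw [hS_def]; ring
  have hrpow : (‖ξ‖ ^ 2 + τ ^ 2) ^ ((3:ℝ)/2) ≤ τ ^ 3 * S ^ ((3:ℝ)/2) := by
    have h1 : (‖ξ‖ ^ 2 + τ ^ 2) ^ ((3:ℝ)/2) ≤ (τ ^ 2 * S) ^ ((3:ℝ)/2) :=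
      Real.rpow_le_rpow (by positivity) hsum (by norm_num)
    have h2 : ((τ ^ 2 * S)) ^ ((3:ℝ)/2) = (τ ^ 2) ^ ((3:ℝ)/2) * S ^ ((3:ℝ)/2) :=
      Real.mul_rpow (by positivity) (le_of_lt hS)
    have h3 : ((τ ^ 2 : ℝ)) ^ ((3:ℝ)/2) = τ ^ 3 := by
      rw [← Real.rpow_natCast τ 2, ← Real.rpow_mul (le_of_lt hτ)]
      norm_num
    rw [h2, h3] at h1
    exact h1
  -- finish
  have hCmul : 4 * γ ^ 3 * Real.exp (-(γ * B)) ^ 3 * m ^ 4 / S ^ ((3:ℝ)/2) *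
      ((‖ξ‖ ^ 2 + τ ^ 2) ^ ((3:ℝ)/2)) ≤
      4 * γ ^ 3 * Real.exp (-(γ * B)) ^ 3 * m ^ 4 * τ ^ 3 := by
    have hC0 : 0 ≤ 4 * γ ^ 3 * Real.exp (-(γ * B)) ^ 3 * m ^ 4 / S ^ ((3:ℝ)/2) := by positivity
    calc 4 * γ ^ 3 * Real.exp (-(γ * B)) ^ 3 * m ^ 4 / S ^ ((3:ℝ)/2) *
        ((‖ξ‖ ^ 2 + τ ^ 2) ^ ((3:ℝ)/2))
        ≤ 4 * γ ^ 3 * Real.exp (-(γ * B)) ^ 3 * m ^ 4 / S ^ ((3:ℝ)/2) * (τ ^ 3 * S ^ ((3:ℝ)/2)) :=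
          mul_le_mul_of_nonneg_left hrpow hC0
      _ = 4 * γ ^ 3 * Real.exp (-(γ * B)) ^ 3 * m ^ 4 * τ ^ 3 := by
          field_simp
  refine le_trans hCmul (le_trans ?_ hQ)
  have : Real.exp (-(γ * B)) ^ 3 ≤ e ^ 3 :=
    pow_le_pow_left₀ (le_of_lt (Real.exp_pos _)) he1 3
  have hc : (0:ℝ) ≤ 4 * τ ^ 3 * γ ^ 3 * m ^ 4 := by positivity
  have := mul_le_mul_of_nonneg_left this hc
  linarith
end

section
/- Let V ⊂ ℝ^d be a bounded open set and let φ ∈ C^∞(ℝ^d; ℝ) satisfy the sub-ellipticity condition on the closure of V. Then there exist constants C > 0 and δ > 0 such that for every x in the closure of V, every ξ ∈ ℝ^d and every τ > 0: C·[ 4(ξ·∇φ(x))² + (τ² + |ξ|²)^{−1}(|ξ|² − τ²|∇φ(x)|²)² ] + 4⟨φ''(x)ξ, ξ⟩ + 4τ²⟨φ''(x)∇φ(x), ∇φ(x)⟩ ≥ δ (τ² + |ξ|²). -/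
set_option maxHeartbeats 1000000

open Filter Topology

lemma compact_penalty_bound {P : Type*} [MetricSpace P]
    {T : Set P} (hT : IsCompact T) {A B : P → ℝ} (hA : Continuous A) (hB : Continuous B)
    (hA0 : ∀ p, 0 ≤ A p)
    (hpos : ∀ p ∈ T, A p = 0 → 0 < B p) :
    ∃ C > (0:ℝ), ∃ δ > (0:ℝ), ∀ p ∈ T, δ ≤ C * A p + B p := by
  by_contra hcon
  push_neg at hcon
  have hseq : ∀ n : ℕ, ∃ p ∈ T, ((n:ℝ) + 1) * A p + B p < 1 / ((n:ℝ) + 1) := by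
    intro n
    obtain ⟨p, hpT, hp⟩ := hcon ((n:ℝ)+1) (by positivity) (1/((n:ℝ)+1)) (by positivity)
    exact ⟨p, hpT, hp⟩
  choose p hpT hplt using hseq
  -- bound for B on T
  obtain ⟨M, hM⟩ := hT.exists_bound_of_continuousOn hB.continuousOn
  have hM0 : 0 ≤ M := le_trans (norm_nonneg _) (hM (p 0) (hpT 0))
  obtain ⟨a, haT, ψ, hψ, hlim⟩ := hT.tendsto_subseq hpT
  have hAbd : ∀ n : ℕ, A (p n) ≤ (1 + M) / ((n:ℝ) + 1) := by
    intro n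
    have h1 : -M ≤ B (p n) := by
      have := hM (p n) (hpT n)
      rw [Real.norm_eq_abs] at this
      linarith [abs_le.mp this |>.1]
    have h2 : ((n:ℝ)+1) * A (p n) ≤ 1 + M := by
      have h3 : 1 / ((n:ℝ)+1) ≤ 1 := by
        rw [div_le_one (by positivity)]; linarith [Nat.cast_nonneg (α := ℝ) n]
      linarith [hplt n]
    rw [le_div_iff₀ (by positivity)]
    nlinarith
  have hBbd : ∀ n : ℕ, B (p n) ≤ 1 / ((n:ℝ) + 1) := by
    intro n
    have := hplt n
    nlinarith [hA0 (p n), Nat.cast_nonneg (α := ℝ) n]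
  have hten1 : Tendsto (fun k : ℕ => (1:ℝ) / ((k:ℝ) + 1)) atTop (𝓝 0) :=
    tendsto_one_div_add_atTop_nhds_zero_nat
  have hten : Tendsto (fun k : ℕ => (1 + M) / ((k:ℝ) + 1)) atTop (𝓝 0) := by
    have := hten1.const_mul (1 + M)
    simpa [mul_one_div, div_eq_mul_inv] using this
  have hAlim : Tendsto (fun k => A (p (ψ k))) atTop (𝓝 (A a)) :=
    (hA.tendsto a).comp hlim
  have hBlim : Tendsto (fun k => B (p (ψ k))) atTop (𝓝 (B a)) :=
    (hB.tendsto a).comp hlim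
  have hmono : ∀ k : ℕ, (1:ℝ) / ((ψ k : ℝ) + 1) ≤ 1 / ((k:ℝ) + 1) := by
    intro k
    gcongr
    · exact Nat.cast_le.mpr hψ.le_apply
  have hAa : A a ≤ 0 := by
    refine le_of_tendsto_of_tendsto' hAlim hten (fun k => ?_)
    calc A (p (ψ k)) ≤ (1 + M) / ((ψ k : ℝ) + 1) := hAbd (ψ k)
      _ ≤ (1 + M) / ((k:ℝ) + 1) := by
          gcongr
          exact Nat.cast_le.mpr hψ.le_apply
  have hAa0 : A a = 0 := le_antisymm hAa (hA0 a)
  have hBa : B a ≤ 0 := by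
    refine le_of_tendsto_of_tendsto' hBlim hten1 (fun k => le_trans (hBbd (ψ k)) (hmono k))
  exact absurd (hpos a haT hAa0) (not_lt.mpr hBa)

open scoped RealInnerProductSpace

lemma scale_bound {E : Type*} [NormedAddCommGroup E] [InnerProductSpace ℝ E]
    (g0 : E) (H0 : E →L[ℝ] E →L[ℝ] ℝ) (C δ : ℝ) (ξ : E) (τ : ℝ) (hτ : 0 < τ)
    (h : ∀ ξ' : E, ∀ τ' : ℝ, 0 ≤ τ' → τ' ^ 2 + ‖ξ'‖ ^ 2 = 1 →
      δ ≤ C * (4 * ⟪ξ', g0⟫ ^ 2 + (‖ξ'‖ ^ 2 - τ' ^ 2 * ‖g0‖ ^ 2) ^ 2) +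
        (4 * H0 ξ' ξ' + 4 * τ' ^ 2 * H0 g0 g0)) :
    δ * (τ ^ 2 + ‖ξ‖ ^ 2) ≤
      C * (4 * ⟪ξ, g0⟫ ^ 2 + (τ ^ 2 + ‖ξ‖ ^ 2)⁻¹ * (‖ξ‖ ^ 2 - τ ^ 2 * ‖g0‖ ^ 2) ^ 2) +
        4 * H0 ξ ξ + 4 * τ ^ 2 * H0 g0 g0 := by
  have hL : (0:ℝ) < τ ^ 2 + ‖ξ‖ ^ 2 := by positivity
  set l : ℝ := Real.sqrt (τ ^ 2 + ‖ξ‖ ^ 2) with hldef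
  have hl : 0 < l := Real.sqrt_pos.mpr hL
  have hl2 : l ^ 2 = τ ^ 2 + ‖ξ‖ ^ 2 := Real.sq_sqrt hL.le
  have hnorm : ‖l⁻¹ • ξ‖ = l⁻¹ * ‖ξ‖ := by
    rw [norm_smul, Real.norm_eq_abs, abs_of_pos (inv_pos.mpr hl)]
  have hsph : (τ / l) ^ 2 + ‖l⁻¹ • ξ‖ ^ 2 = 1 := by
    rw [hnorm]
    field_simp
    linarith [hl2]
  have hpt := h (l⁻¹ • ξ) (τ / l) (by positivity) hsph
  have e1 : ⟪l⁻¹ • ξ, g0⟫ = l⁻¹ * ⟪ξ, g0⟫ := real_inner_smul_left _ _ _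
  have e3 : H0 (l⁻¹ • ξ) (l⁻¹ • ξ) = l⁻¹ ^ 2 * H0 ξ ξ := by
    rw [H0.map_smul, ContinuousLinearMap.smul_apply, (H0 ξ).map_smul,
      smul_eq_mul, smul_eq_mul]
    ring
  rw [e1, hnorm, e3] at hpt
  have hmul := mul_le_mul_of_nonneg_left hpt hL.le
  have hil : l⁻¹ ^ 2 = (τ ^ 2 + ‖ξ‖ ^ 2)⁻¹ := by rw [inv_pow, hl2]
  calc δ * (τ ^ 2 + ‖ξ‖ ^ 2) = (τ ^ 2 + ‖ξ‖ ^ 2) * δ := by ring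
    _ ≤ (τ ^ 2 + ‖ξ‖ ^ 2) *
        (C * (4 * (l⁻¹ * ⟪ξ, g0⟫) ^ 2 + ((l⁻¹ * ‖ξ‖) ^ 2 - (τ / l) ^ 2 * ‖g0‖ ^ 2) ^ 2) +
          (4 * (l⁻¹ ^ 2 * H0 ξ ξ) + 4 * (τ / l) ^ 2 * H0 g0 g0)) := hmul
    _ = _ := by
        rw [mul_pow l⁻¹ ⟪ξ, g0⟫, mul_pow l⁻¹ ‖ξ‖, div_pow, div_eq_mul_inv (τ^2), ← inv_pow,
          hil]
        field_simp
        ring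

open scoped RealInnerProductSpace

/-- If `φ` is smooth and satisfies the sub-ellipticity condition on the
closure of a bounded open set `V`, then there are `C, δ > 0` such that for all
`x ∈ cl V`, `ξ ∈ ℝ^d`, `τ > 0`,
`C·[4(ξ·∇φ)² + (τ²+|ξ|²)⁻¹(|ξ|²−τ²|∇φ|²)²] + 4⟨φ''ξ,ξ⟩ + 4τ²⟨φ''∇φ,∇φ⟩ ≥ δ(τ²+|ξ|²)`. -/
theorem subelliptic_lower_bound (d : ℕ) (V : Set (EuclideanSpace ℝ (Fin d)))
    (hVopen : IsOpen V) (hVbdd : Bornology.IsBounded V)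
    (φ : EuclideanSpace ℝ (Fin d) → ℝ) (hφ : ContDiff ℝ (⊤ : ℕ∞) φ)
    (hφgrad : ∀ x ∈ closure V, 0 < ‖gradient φ x‖)
    (hsub : ∃ C > (0:ℝ), ∀ x ∈ closure V, ∀ ξ : EuclideanSpace ℝ (Fin d), ∀ τ : ℝ,
      0 < τ → ‖ξ‖ ^ 2 = τ ^ 2 * ‖gradient φ x‖ ^ 2 → ⟪ξ, gradient φ x⟫ = 0 →
      C * (‖ξ‖ ^ 2 + τ ^ 2) ^ ((3:ℝ) / 2) ≤
        4 * τ * (fderiv ℝ (fderiv ℝ φ) x ξ ξ) +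
          4 * τ ^ 3 * (fderiv ℝ (fderiv ℝ φ) x (gradient φ x) (gradient φ x))) :
    ∃ C > (0:ℝ), ∃ δ > (0:ℝ), ∀ x ∈ closure V, ∀ ξ : EuclideanSpace ℝ (Fin d), ∀ τ : ℝ,
      0 < τ →
      δ * (τ ^ 2 + ‖ξ‖ ^ 2) ≤
        C * (4 * ⟪ξ, gradient φ x⟫ ^ 2 +
              (τ ^ 2 + ‖ξ‖ ^ 2)⁻¹ * (‖ξ‖ ^ 2 - τ ^ 2 * ‖gradient φ x‖ ^ 2) ^ 2) +
          4 * (fderiv ℝ (fderiv ℝ φ) x ξ ξ) +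
            4 * τ ^ 2 * (fderiv ℝ (fderiv ℝ φ) x (gradient φ x) (gradient φ x)) := by
  classical
  set g : EuclideanSpace ℝ (Fin d) → EuclideanSpace ℝ (Fin d) := fun x => gradient φ x with hg
  set H : EuclideanSpace ℝ (Fin d) → EuclideanSpace ℝ (Fin d) →L[ℝ] EuclideanSpace ℝ (Fin d) →L[ℝ] ℝ := fun x => fderiv ℝ (fderiv ℝ φ) x with hH
  have hgc : Continuous g := by
    have h1 : Continuous (fderiv ℝ φ) := hφ.continuous_fderiv (by simp)
    exact (InnerProductSpace.toDual ℝ (EuclideanSpace ℝ (Fin d))).symm.continuous.comp h1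
  have hHc : Continuous H := (hφ.fderiv_right (m := (⊤ : ℕ∞)) (by simp)).continuous_fderiv (by simp)
  set A : EuclideanSpace ℝ (Fin d) × EuclideanSpace ℝ (Fin d) × ℝ → ℝ := fun p =>
    4 * ⟪p.2.1, g p.1⟫ ^ 2 + (‖p.2.1‖ ^ 2 - p.2.2 ^ 2 * ‖g p.1‖ ^ 2) ^ 2 with hA
  set B : EuclideanSpace ℝ (Fin d) × EuclideanSpace ℝ (Fin d) × ℝ → ℝ := fun p =>
    4 * (H p.1 p.2.1 p.2.1) + 4 * p.2.2 ^ 2 * (H p.1 (g p.1) (g p.1)) with hB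
  have hAc : Continuous A := by
    apply Continuous.add
    · exact (continuous_const.mul (((continuous_snd.fst).inner
        (hgc.comp continuous_fst)).pow 2))
    · exact (((continuous_snd.fst.norm.pow 2).sub
        ((continuous_snd.snd.pow 2).mul ((hgc.comp continuous_fst).norm.pow 2))).pow 2)
  have hBc : Continuous B := by
    apply Continuous.add
    · exact continuous_const.mul
        (((hHc.comp continuous_fst).clm_apply continuous_snd.fst).clm_apply continuous_snd.fst)
    · exact (continuous_const.mul (continuous_snd.snd.pow 2)).mul
        (((hHc.comp continuous_fst).clm_apply (hgc.comp continuous_fst)).clm_apply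
          (hgc.comp continuous_fst))
  have hA0 : ∀ p, 0 ≤ A p := by intro p; simp only [hA]; positivity
  -- the compact set
  set S : Set (EuclideanSpace ℝ (Fin d) × ℝ) := {q | 0 ≤ q.2 ∧ q.2 ^ 2 + ‖q.1‖ ^ 2 = 1} with hS
  have hSc : IsCompact S := by
    apply (isCompact_closedBall (0 : EuclideanSpace ℝ (Fin d) × ℝ) 1).of_isClosed_subset
    · exact (isClosed_le continuous_const continuous_snd).inter
        (isClosed_eq ((continuous_snd.pow 2).add (continuous_fst.norm.pow 2)) continuous_const)
    · rintro ⟨ξ, τ⟩ ⟨h1, h2⟩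
      simp only [Metric.mem_closedBall, dist_zero_right, Prod.norm_def]
      rw [max_le_iff]
      constructor
      · nlinarith [norm_nonneg ξ, sq_nonneg τ, abs_nonneg τ]
      · rw [Real.norm_eq_abs]
        nlinarith [norm_nonneg ξ, sq_nonneg ‖ξ‖, abs_nonneg τ, sq_abs τ]
  have hK : IsCompact (closure V) := hVbdd.isCompact_closure
  have hT : IsCompact ((closure V) ×ˢ S) := hK.prod hSc
  obtain ⟨C₀, hC₀, hs⟩ := hsub
  have key : ∃ C > (0:ℝ), ∃ δ > (0:ℝ), ∀ p ∈ (closure V) ×ˢ S, δ ≤ C * A p + B p := by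
    apply compact_penalty_bound hT hAc hBc hA0
    rintro ⟨x, ξ, τ⟩ ⟨hx, hτ0, hsph⟩ hA0'
    dsimp only at hx hτ0 hsph
    simp only [hA] at hA0'
    have h1 : ⟪ξ, g x⟫ = 0 := by nlinarith [sq_nonneg ⟪ξ, g x⟫, sq_nonneg (‖ξ‖^2 - τ^2*‖g x‖^2)]
    have h2 : ‖ξ‖ ^ 2 = τ ^ 2 * ‖g x‖ ^ 2 := by
      nlinarith [sq_nonneg ⟪ξ, g x⟫, sq_nonneg (‖ξ‖^2 - τ^2*‖g x‖^2)]
    have hτ : 0 < τ := by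
      rcases lt_or_eq_of_le hτ0 with h | h
      · exact h
      · exfalso
        rw [← h] at hsph h2
        nlinarith [h2, hsph, sq_nonneg ‖ξ‖]
    have := hs x hx ξ τ hτ h2 h1
    have hone : ‖ξ‖ ^ 2 + τ ^ 2 = 1 := by linarith [hsph]
    rw [hone, Real.one_rpow, mul_one] at this
    simp only [hB]
    have hBval : 4 * τ * (H x ξ ξ) + 4 * τ ^ 3 * (H x (g x) (g x))
        = τ * (4 * (H x ξ ξ) + 4 * τ ^ 2 * (H x (g x) (g x))) := by ring
    rw [hBval] at this
    have : 0 < τ * (4 * (H x ξ ξ) + 4 * τ ^ 2 * (H x (g x) (g x))) := lt_of_lt_of_le hC₀ this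
    exact (mul_pos_iff_of_pos_left hτ).mp this
  obtain ⟨C, hC, δ, hδ, hkey⟩ := key
  refine ⟨C, hC, δ, hδ, ?_⟩
  intro x hx ξ τ hτ
  refine scale_bound (gradient φ x) (fderiv ℝ (fderiv ℝ φ) x) C δ ξ τ hτ ?_
  intro ξ' τ' hτ' hsph
  have h := hkey (x, ξ', τ') ⟨hx, hτ', hsph⟩
  simp only [hA, hB] at h
  linarith [h]
end
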